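/- arXiv:math/0603251 — 2 statements merged into one kernel-verified Lean document; each statement's English description precedes it below -/
import Mathlib

section
/- Let a ∈ ℍⁿ be an arbitrary quaternion vector (regarded as a row vector) and let v ∈ ℝⁿ be a real vector with ‖v‖ = 1. Then there exist a quaternion vector u ∈ ℍⁿ with ‖u‖ = √2 and a quaternion scalar z with |z| = 1 such that for every index j we have (aⱼ − (∑ᵢ aᵢ * uᵢ) * (star uⱼ)) * z = ‖a‖ * vⱼ; that is, the right Householder matrix G = (I − u ūᵀ) z satisfies aᵀ G = ‖a‖ vᵀ. -/
/-!
Write `α = ‖a‖` and `c = ∑ aᵢ vᵢ`, and pick a unit quaternion `z` with `c z = -|c|`. The vector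
`y = α v z̄` has `‖y‖ = ‖a‖`, and `∑ aᵢ ȳᵢ = α c z = -α |c|` is a real number
`r < ‖a‖²`.
For such a pair the Householder vector `u = κ (a - y)*`, normalised by `κ² (‖a‖² - r) = 1`, has
`‖u‖² = 2` and sends `a` to `y`, because `‖a - y‖² = 2 (‖a‖² - r)`; finally `y z = α v`.
If `a = 0` every `u` of norm `√2` works.
-/

open Finset

namespace Quaternion

lemma mul_star_eq_coe_norm_sq (q : ℍ[ℝ]) : q * star q = ((‖q‖ ^ 2 : ℝ) : ℍ[ℝ]) := by
  rw [self_mul_star, normSq_eq_norm_mul_self, sq]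

lemma coe_sum {ι : Type*} (s : Finset ι) (f : ι → ℝ) :
    ((∑ i ∈ s, f i : ℝ) : ℍ[ℝ]) = ∑ i ∈ s, (f i : ℍ[ℝ]) :=
  map_sum (algebraMap ℝ ℍ[ℝ]) f s

lemma exists_norm_eq_one_mul_eq_neg_norm (c : ℍ[ℝ]) :
    ∃ z : ℍ[ℝ], ‖z‖ = 1 ∧ c * z = ((-‖c‖ : ℝ) : ℍ[ℝ]) := by
  rcases eq_or_ne c 0 with rfl | hc
  · exact ⟨1, norm_one, by simp⟩
  · have hc' : ‖c‖ ≠ 0 := norm_ne_zero_iff.2 hc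
    refine ⟨(-‖c‖⁻¹) • star c, ?_, ?_⟩
    · rw [norm_smul, norm_star, norm_neg, norm_inv, norm_norm, inv_mul_cancel₀ hc']
    · rw [mul_smul_comm, mul_star_eq_coe_norm_sq, ← coe_mul_eq_smul, ← coe_mul]
      congr 1
      field_simp

section Householder

variable {ι : Type*} [Fintype ι]

lemma sum_mul_star_self (a : ι → ℍ[ℝ]) :
    ∑ i, a i * star (a i) = ((∑ i, ‖a i‖ ^ 2 : ℝ) : ℍ[ℝ]) := by
  simp only [mul_star_eq_coe_norm_sq, coe_sum]

lemma sum_mul_star_smul_coe_mul_star (a : ι → ℍ[ℝ]) (v : ι → ℝ) (α : ℝ) (z : ℍ[ℝ]) :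
    ∑ j, a j * star (α • ((v j : ℍ[ℝ]) * star z)) = α • ((∑ j, a j * v j) * z) := by
  simp only [star_smul, star_mul, star_star, star_coe, mul_smul_comm, ← coe_commutes,
    ← mul_assoc, ← smul_sum, ← sum_mul]

theorem exists_householder_of_sum_mul_star_eq_coe {a y : ι → ℍ[ℝ]} {r : ℝ}
    (hnorm : ∑ i, ‖y i‖ ^ 2 = ∑ i, ‖a i‖ ^ 2) (hr : ∑ i, a i * star (y i) = r)
    (hlt : r < ∑ i, ‖a i‖ ^ 2) :
    ∃ u : ι → ℍ[ℝ], ∑ i, ‖u i‖ ^ 2 = 2 ∧ ∀ j, a j - (∑ i, a i * u i) * star (u j) = y j := by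
  have hya : ∑ i, y i * star (a i) = r := by
    rw [← star_coe, ← hr, star_sum]
    simp only [star_mul, star_star]
  have ha_w : ∑ i, a i * star (a i - y i) = ((∑ i, ‖a i‖ ^ 2 - r : ℝ) : ℍ[ℝ]) := by
    simp only [star_sub, mul_sub, sum_sub_distrib, sum_mul_star_self, hr, Quaternion.coe_sub]
  have hy_w : ∑ i, y i * star (a i - y i) = ((r - ∑ i, ‖a i‖ ^ 2 : ℝ) : ℍ[ℝ]) := by
    simp only [star_sub, mul_sub, sum_sub_distrib, sum_mul_star_self, hya, hnorm,
      Quaternion.coe_sub]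
  have hs : ∑ i, ‖a i - y i‖ ^ 2 = 2 * (∑ i, ‖a i‖ ^ 2 - r) := by
    apply Quaternion.coe_injective
    rw [← sum_mul_star_self]
    simp only [sub_mul (a _), sum_sub_distrib, ha_w, hy_w, ← Quaternion.coe_sub]
    ring_nf
  obtain ⟨κ, hκ⟩ : ∃ κ : ℝ, κ ^ 2 * (∑ i, ‖a i‖ ^ 2 - r) = 1 :=
    ⟨(√(∑ i, ‖a i‖ ^ 2 - r))⁻¹, by
      rw [inv_pow, Real.sq_sqrt (sub_nonneg.2 hlt.le), inv_mul_cancel₀ (sub_ne_zero.2 hlt.ne')]⟩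
  refine ⟨fun i => κ • star (a i - y i), ?_, fun j => ?_⟩
  · simp only [norm_smul, norm_star, mul_pow, ← mul_sum, Real.norm_eq_abs, sq_abs, hs]
    linear_combination 2 * hκ
  · simp only [mul_smul_comm, ← smul_sum, ha_w, star_smul, star_star]
    rw [smul_mul_assoc, coe_mul_eq_smul, smul_smul, smul_smul, ← sq, hκ, one_smul,
      sub_sub_cancel]

end Householder

end Quaternion

/-- **Right quaternion Householder transformation** (Theorem 2 of the paper).
Given an arbitrary quaternion row vector `a` and a real unit vector `v`, there exist a
quaternion vector `u` of norm `√2` and a unit quaternion scalar `z` such that the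
right Householder matrix `G = (I - u ūᵀ) z` satisfies `aᵀ G = ‖a‖ vᵀ`. -/
theorem right_quaternion_householder (n : ℕ) (a : Fin n → Quaternion ℝ) (v : Fin n → ℝ)
    (hv : Real.sqrt (∑ i, (v i) ^ 2) = 1) :
    ∃ (u : Fin n → Quaternion ℝ) (z : Quaternion ℝ),
      Real.sqrt (∑ i, ‖u i‖ ^ 2) = Real.sqrt 2 ∧ ‖z‖ = 1 ∧
      ∀ j, (a j - (∑ i, a i * u i) * star (u j)) * z =
        ((Real.sqrt (∑ k, ‖a k‖ ^ 2) : ℝ) : Quaternion ℝ) * ((v j : ℝ) : Quaternion ℝ) := by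
  have hv : ∑ i, v i ^ 2 = 1 := Real.sqrt_eq_one.1 hv
  set α := √(∑ k, ‖a k‖ ^ 2)
  rcases eq_or_ne a 0 with rfl | ha
  · refine ⟨fun i => ((√2 * v i : ℝ) : Quaternion ℝ), 1, ?_, norm_one, fun j => by simp [α]⟩
    simp only [Quaternion.norm_coe, Real.norm_eq_abs, sq_abs, mul_pow, ← mul_sum, hv,
      Real.sq_sqrt zero_le_two, mul_one]
  have hA : 0 < ∑ k, ‖a k‖ ^ 2 := by
    obtain ⟨i, hi⟩ := Function.ne_iff.1 ha
    exact sum_pos' (fun _ _ => sq_nonneg _) ⟨i, mem_univ i, pow_pos (norm_pos_iff.2 hi) 2⟩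
  have hα2 : α ^ 2 = ∑ k, ‖a k‖ ^ 2 := Real.sq_sqrt hA.le
  set c := ∑ i, a i * (v i : Quaternion ℝ)
  obtain ⟨z, hz, hcz⟩ := Quaternion.exists_norm_eq_one_mul_eq_neg_norm c
  set y : Fin n → Quaternion ℝ := fun j => α • ((v j : Quaternion ℝ) * star z)
  have hy : ∑ j, ‖y j‖ ^ 2 = ∑ k, ‖a k‖ ^ 2 := by
    simp only [y, norm_smul, norm_mul, Quaternion.norm_star, hz, Quaternion.norm_coe,
      Real.norm_eq_abs, mul_one, sq_abs, mul_pow, ← mul_sum, hv, hα2]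
  have hay : ∑ j, a j * star (y j) = ((-(α * ‖c‖) : ℝ) : Quaternion ℝ) := by
    rw [Quaternion.sum_mul_star_smul_coe_mul_star, hcz, ← Quaternion.coe_mul_eq_smul,
      ← Quaternion.coe_mul, mul_neg]
  have hlt : -(α * ‖c‖) < ∑ k, ‖a k‖ ^ 2 := (neg_nonpos.2 (by positivity)).trans_lt hA
  obtain ⟨u, hu, hrefl⟩ := Quaternion.exists_householder_of_sum_mul_star_eq_coe hy hay hlt
  refine ⟨u, z, by rw [hu], hz, fun j => ?_⟩
  rw [hrefl, smul_mul_assoc, mul_assoc, Quaternion.star_mul_self,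
    Quaternion.normSq_eq_norm_mul_self, hz, mul_one, Quaternion.coe_one, mul_one,
    Quaternion.coe_mul_eq_smul]
end

section
/- Let A be an r × c quaternion matrix with r ≥ 1 and c ≥ 1, and let a denote its first column. Then there exists a unitary quaternion matrix H ∈ ℍ^{r×r} such that the product H * A has first column equal to ‖a‖ times the first standard basis vector: (H * A) i 0 = 0 for all i ≠ 0, and (H * A) 0 0 equals the real quaternion ‖a‖ (in particular it has zero vector part and is nonnegative). -/
/-!
A diagonal unitary first turns the pivot entry `a z` into the real number `‖a z‖`, using the
unit quaternion `u = star (a z) / ‖a z‖`. Once `a z = t` is real, put `ρ = ‖a‖` and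
`v = a - ρ e_z`: then `vᴴ a = ρ² - ρ t` is real, hence central, and `‖v‖² = 2 vᴴ a`, so the
Householder reflection `1 - 2 v vᴴ / ‖v‖²` maps `a` to `a - v = ρ e_z`.
-/

open Matrix

lemma Matrix.diagonal_mem_unitary {n R : Type*} [Fintype n] [DecidableEq n] [Semiring R]
    [StarRing R] {d : n → R} (hd : ∀ i, d i ∈ unitary R) :
    diagonal d ∈ unitary (Matrix n n R) := by
  simp only [Unitary.mem_iff, star_eq_conjTranspose, diagonal_conjTranspose,
    diagonal_mul_diagonal, Pi.star_apply]
  exact ⟨by simp [(Unitary.mem_iff.1 (hd _)).1], by simp [(Unitary.mem_iff.1 (hd _)).2]⟩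

namespace Quaternion

lemma exists_mem_unitary_mul_eq_norm (q : ℍ) : ∃ u ∈ unitary ℍ, u * q = ‖q‖ := by
  rcases eq_or_ne q 0 with rfl | hq
  · exact ⟨1, one_mem _, by simp⟩
  have hq' : ‖q‖ ≠ 0 := norm_ne_zero_iff.2 hq
  refine ⟨(‖q‖⁻¹ : ℝ) • star q, Unitary.mem_iff.2 ⟨?_, ?_⟩, ?_⟩
  · rw [Quaternion.star_smul, star_star, smul_mul_smul_comm, self_mul_star,
      normSq_eq_norm_mul_self, smul_coe]
    field_simp
    simp
  · rw [Quaternion.star_smul, star_star, smul_mul_smul_comm, star_mul_self,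
      normSq_eq_norm_mul_self, smul_coe]
    field_simp
    simp
  · rw [smul_mul_assoc, star_mul_self, normSq_eq_norm_mul_self, smul_coe]
    field_simp

variable {n : Type*} [Fintype n]

lemma star_dotProduct_self (v : n → ℍ) : star v ⬝ᵥ v = ((∑ i, ‖v i‖ ^ 2 : ℝ) : ℍ) := by
  simp only [dotProduct, Pi.star_apply, star_mul_self, normSq_eq_norm_mul_self, ← sq]
  exact (map_sum (algebraMap ℝ ℍ) _ _).symm

lemma vecMulVec_star_mul_self (v : n → ℍ) :
    vecMulVec v (star v) * vecMulVec v (star v) = (∑ i, ‖v i‖ ^ 2) • vecMulVec v (star v) := by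
  rw [vecMulVec_mul_vecMulVec, star_dotProduct_self, ← vecMulVec_smul]
  congr 1
  funext i
  exact Quaternion.coe_mul_eq_smul _ _

variable [DecidableEq n]

/-- The Householder reflection `1 - 2 v vᴴ / ‖v‖²`; since `2 / 0 = 0` it is `1` for `v = 0`. -/
noncomputable def householder (v : n → ℍ) : Matrix n n ℍ :=
  1 - (2 / ∑ i, ‖v i‖ ^ 2 : ℝ) • vecMulVec v (star v)

lemma conjTranspose_householder (v : n → ℍ) : (householder v)ᴴ = householder v := by
  refine Matrix.ext fun i j => ?_
  rw [householder, conjTranspose_apply, Matrix.sub_apply, star_sub, Matrix.smul_apply,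
    Quaternion.star_smul, ← conjTranspose_apply, ← conjTranspose_apply, conjTranspose_one,
    conjTranspose_vecMulVec, star_star]
  rfl

lemma householder_mul_self (v : n → ℍ) : householder v * householder v = 1 := by
  set s := ∑ i, ‖v i‖ ^ 2
  have hs : (2 / s) * (2 / s) * s = 2 / s + 2 / s := by
    rcases eq_or_ne s 0 with h | h
    · simp [h]
    · field_simp; ring
  rw [householder, sub_mul, mul_sub, mul_sub, smul_mul_smul_comm, vecMulVec_star_mul_self,
    smul_smul, hs, add_smul]
  simp only [one_mul, mul_one]
  abel

lemma householder_mem_unitary (v : n → ℍ) : householder v ∈ unitary (Matrix n n ℍ) := by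
  rw [Unitary.mem_iff, star_eq_conjTranspose, conjTranspose_householder, householder_mul_self]
  exact ⟨rfl, rfl⟩

lemma householder_mulVec {v a : n → ℍ} {c : ℝ} (hva : star v ⬝ᵥ a = c)
    (hvv : ∑ i, ‖v i‖ ^ 2 = 2 * c) : householder v *ᵥ a = a - v := by
  rcases eq_or_ne c 0 with rfl | hc
  · have hv : v = 0 := by
      funext i
      have hvi := (Finset.sum_eq_zero_iff_of_nonneg fun j _ => sq_nonneg ‖v j‖).1
        (by simpa using hvv) i (Finset.mem_univ i)
      simpa using hvi
    simp [householder, hv]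
  have hcv : MulOpposite.op (c : ℍ) • v = c • v := funext fun i => mul_coe_eq_smul _ _
  rw [householder, sub_mulVec, one_mulVec, smul_mulVec, vecMulVec_mulVec, hva, hvv, hcv,
    smul_smul, div_mul_eq_div_div, div_self two_ne_zero, one_div_mul_cancel hc, one_smul]

lemma householder_mulVec_eq_single {a : n → ℍ} {z : n} {t : ℝ} (hz : a z = t) :
    householder (a - Pi.single z (√(∑ i, ‖a i‖ ^ 2) : ℍ)) *ᵥ a =
      Pi.single z (√(∑ i, ‖a i‖ ^ 2) : ℍ) := by
  set ρ := √(∑ i, ‖a i‖ ^ 2)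
  have hρ : ρ ^ 2 = ∑ i, ‖a i‖ ^ 2 := Real.sq_sqrt (by positivity)
  set v := a - Pi.single z (ρ : ℍ)
  have hva : star v ⬝ᵥ a = ((ρ ^ 2 - ρ * t : ℝ) : ℍ) := by
    rw [star_sub, sub_dotProduct, star_dotProduct_self, ← hρ, ← Pi.single_star,
      single_dotProduct, star_coe, hz]
    norm_cast
  have hvz : v z = ((t - ρ : ℝ) : ℍ) := by
    simp only [v, Pi.sub_apply, Pi.single_eq_same, hz, coe_sub]
  have hvv : star v ⬝ᵥ v = ((2 * (ρ ^ 2 - ρ * t) : ℝ) : ℍ) := by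
    rw [dotProduct_sub, hva, dotProduct_single, Pi.star_apply, hvz, star_coe, ← coe_mul,
      ← coe_sub]
    congr 1
    ring
  rw [star_dotProduct_self, coe_inj] at hvv
  rw [householder_mulVec hva hvv, sub_sub_cancel]

theorem exists_mem_unitary_mulVec_eq_single (z : n) (a : n → ℍ) :
    ∃ H ∈ unitary (Matrix n n ℍ), H *ᵥ a = Pi.single z (√(∑ i, ‖a i‖ ^ 2) : ℍ) := by
  obtain ⟨u, hu, hua⟩ := exists_mem_unitary_mul_eq_norm (a z)
  set d : n → ℍ := Function.update 1 z u
  have hdz : d z = u := Function.update_self ..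
  have hd : ∀ i, d i ∈ unitary ℍ := by
    intro i
    rcases eq_or_ne i z with rfl | hi
    · simpa [d] using hu
    · simp [d, hi]
  have hb : ∀ i, ‖(diagonal d *ᵥ a) i‖ = ‖a i‖ := fun i => by
    rw [mulVec_diagonal, norm_mul, CStarRing.norm_of_mem_unitary (hd i), one_mul]
  have hbz : (diagonal d *ᵥ a) z = ‖a z‖ := by
    rw [mulVec_diagonal, hdz, hua]
  refine ⟨householder (diagonal d *ᵥ a - Pi.single z (√(∑ i, ‖a i‖ ^ 2) : ℍ)) * diagonal d,
    mul_mem (householder_mem_unitary _) (diagonal_mem_unitary hd), ?_⟩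
  rw [← mulVec_mulVec]
  simpa only [hb] using householder_mulVec_eq_single hbz

end Quaternion

/-- **Zeroing the first column** (the basic step of the bidiagonalization, §3 of the
paper): for any `r × c` quaternion matrix `A` (with `r, c ≥ 1`) there is a unitary
quaternion matrix `H` such that the first column of `H A` is `‖a‖ e₁`, where `a` is the
first column of `A`: all subdiagonal entries vanish and the leading entry is the real
number `‖a‖`. -/
theorem quaternion_householder_zeros_first_column (r c : ℕ) (hr : 1 ≤ r) (hc : 1 ≤ c)
    (A : Matrix (Fin r) (Fin c) (Quaternion ℝ)) :
    ∃ H : Matrix (Fin r) (Fin r) (Quaternion ℝ),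
      H * Hᴴ = 1 ∧ Hᴴ * H = 1 ∧
      (∀ i : Fin r, i ≠ ⟨0, hr⟩ → (H * A) i ⟨0, hc⟩ = 0) ∧
      (H * A) ⟨0, hr⟩ ⟨0, hc⟩ =
        ((Real.sqrt (∑ i, ‖A i ⟨0, hc⟩‖ ^ 2) : ℝ) : Quaternion ℝ) := by
  obtain ⟨H, hH, hHa⟩ :=
    Quaternion.exists_mem_unitary_mulVec_eq_single ⟨0, hr⟩ (fun i => A i ⟨0, hc⟩)
  have hcol (i : Fin r) : (H * A) i ⟨0, hc⟩ =
      (Pi.single ⟨0, hr⟩ ((√(∑ i, ‖A i ⟨0, hc⟩‖ ^ 2) : ℝ) : Quaternion ℝ) :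
        Fin r → Quaternion ℝ) i :=
    congrFun hHa i
  rw [Unitary.mem_iff, star_eq_conjTranspose] at hH
  exact ⟨H, hH.2, hH.1, fun i hi => by rw [hcol, Pi.single_eq_of_ne hi],
    by rw [hcol, Pi.single_eq_same]⟩
end
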